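/- For all (y,p) ∈ (H^{1,1/2}_{0,per}(Q_T))² the following identities hold: B((y,p),(y,p)) = ‖y‖²_{L²(Q_T)} + λ^{-1}‖p‖²_{L²(Q_T)}; B((y,p),(−λ^{-1/2}p, λ^{1/2}y)) = λ^{-1/2}∫_{Q_T} ν|∇p|² dx dt + λ^{1/2}∫_{Q_T} ν|∇y|² dx dt; and B((y,p),(−λ^{-1/2}p^⊥, −λ^{1/2}y^⊥)) = λ^{-1/2}⟨σ∂_t^{1/2}p, ∂_t^{1/2}p⟩ + λ^{1/2}⟨σ∂_t^{1/2}y, ∂_t^{1/2}y⟩. -/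

import Mathlib

open MeasureTheory Real

noncomputable section

/-- Points of `ℝ^d`. -/
abbrev Pt (d : ℕ) := EuclideanSpace ℝ (Fin d)

/-- `L²(Ω)` inner product `⟨f,g⟩_Ω = ∫_Ω f g dx` (`μ` is the Lebesgue measure restricted to `Ω`). -/
def ipS {d : ℕ} (μ : Measure (Pt d)) (f g : Pt d → ℝ) : ℝ := ∫ x, f x * g x ∂μ

/-- Squared `L²(Ω)` norm. -/
def nS2 {d : ℕ} (μ : Measure (Pt d)) (f : Pt d → ℝ) : ℝ := ipS μ f f

/-- `L²(Ω)^d` inner product for vector fields. -/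
def ipV {d : ℕ} (μ : Measure (Pt d)) (f g : Pt d → Pt d) : ℝ := ∫ x, inner ℝ (f x) (g x) ∂μ

/-- Squared `L²(Ω)^d` norm for vector fields. -/
def nV2 {d : ℕ} (μ : Measure (Pt d)) (f : Pt d → Pt d) : ℝ := ipV μ f f

/-- Spatial divergence of a vector field. -/
def divg {d : ℕ} (τ : Pt d → Pt d) (x : Pt d) : ℝ :=
  ∑ i : Fin d, fderiv ℝ (fun y => τ y i) x (EuclideanSpace.single i (1 : ℝ))

/-- A (time-periodic) function on `Q_T = Ω × (0,T)`, identified with its Fourier series in time: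
`v(x,t) = a0 x + ∑_{k≥0} (ac k x) cos((k+1) ω t) + (as k x) sin((k+1) ω t)`.
The index `k : ℕ` corresponds to the mode `k+1`. -/
structure TP (d : ℕ) where
  a0 : Pt d → ℝ
  ac : ℕ → Pt d → ℝ
  as : ℕ → Pt d → ℝ

/-- A vector-field-valued (time-periodic) function on `Q_T` (gradients, fluxes). -/
structure TPV (d : ℕ) where
  a0 : Pt d → Pt d
  ac : ℕ → Pt d → Pt d
  as : ℕ → Pt d → Pt d

namespace TP

variable {d : ℕ}

/-- The orthogonal companion `v^⊥(x,t) = ∑_{k≥1} (−v_k^c sin(kωt) + v_k^s cos(kωt))`. -/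
def perp (v : TP d) : TP d :=
  ⟨0, fun k => v.as k, fun k => -(v.ac k)⟩

/-- Time derivative `∂_t v` in Fourier space. -/
def dt (ω : ℝ) (v : TP d) : TP d :=
  ⟨0, fun k x => ((k : ℝ) + 1) * ω * v.as k x,
      fun k x => -(((k : ℝ) + 1) * ω * v.ac k x)⟩

/-- Multiplication by a spatial weight (e.g. `σ v`). -/
def wmul (σf : Pt d → ℝ) (v : TP d) : TP d :=
  ⟨fun x => σf x * v.a0 x, fun k x => σf x * v.ac k x, fun k x => σf x * v.as k x⟩

def add (u v : TP d) : TP d :=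
  ⟨fun x => u.a0 x + v.a0 x, fun k x => u.ac k x + v.ac k x, fun k x => u.as k x + v.as k x⟩

def sub (u v : TP d) : TP d :=
  ⟨fun x => u.a0 x - v.a0 x, fun k x => u.ac k x - v.ac k x, fun k x => u.as k x - v.as k x⟩

def smul (c : ℝ) (v : TP d) : TP d :=
  ⟨fun x => c * v.a0 x, fun k x => c * v.ac k x, fun k x => c * v.as k x⟩

/-- Spatial gradient, applied coefficientwise. -/
def grad (v : TP d) : TPV d :=
  ⟨gradient v.a0, fun k => gradient (v.ac k), fun k => gradient (v.as k)⟩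

/-- `v` is multiharmonic of order `N`: all Fourier modes `> N` vanish. -/
def MH (v : TP d) (N : ℕ) : Prop := ∀ k, N ≤ k → v.ac k = 0 ∧ v.as k = 0

/-- All Fourier coefficients vanish `μ`-a.e. -/
def AEZero (μ : Measure (Pt d)) (v : TP d) : Prop :=
  v.a0 =ᵐ[μ] 0 ∧ (∀ k, v.ac k =ᵐ[μ] 0) ∧ (∀ k, v.as k =ᵐ[μ] 0)

/-- Equality of all Fourier coefficients `μ`-a.e. -/
def AEEq (μ : Measure (Pt d)) (u v : TP d) : Prop :=
  u.a0 =ᵐ[μ] v.a0 ∧ (∀ k, u.ac k =ᵐ[μ] v.ac k) ∧ (∀ k, u.as k =ᵐ[μ] v.as k)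

end TP

namespace TPV

variable {d : ℕ}

def add (u v : TPV d) : TPV d :=
  ⟨fun x => u.a0 x + v.a0 x, fun k x => u.ac k x + v.ac k x, fun k x => u.as k x + v.as k x⟩

def sub (u v : TPV d) : TPV d :=
  ⟨fun x => u.a0 x - v.a0 x, fun k x => u.ac k x - v.ac k x, fun k x => u.as k x - v.as k x⟩

def smul (c : ℝ) (v : TPV d) : TPV d :=
  ⟨fun x => c • v.a0 x, fun k x => c • v.ac k x, fun k x => c • v.as k x⟩

/-- Multiplication by a spatial scalar weight (e.g. `ν ∇y`). -/
def wmul (νf : Pt d → ℝ) (v : TPV d) : TPV d :=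
  ⟨fun x => νf x • v.a0 x, fun k x => νf x • v.ac k x, fun k x => νf x • v.as k x⟩

/-- Spatial divergence, applied coefficientwise. -/
def div (τ : TPV d) : TP d :=
  ⟨divg τ.a0, fun k => divg (τ.ac k), fun k => divg (τ.as k)⟩

/-- Multiharmonic of order `N`. -/
def MH (τ : TPV d) (N : ℕ) : Prop := ∀ k, N ≤ k → τ.ac k = 0 ∧ τ.as k = 0

def AEZero (μ : Measure (Pt d)) (τ : TPV d) : Prop :=
  τ.a0 =ᵐ[μ] 0 ∧ (∀ k, τ.ac k =ᵐ[μ] 0) ∧ (∀ k, τ.as k =ᵐ[μ] 0)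

def AEEq (μ : Measure (Pt d)) (τ ρ : TPV d) : Prop :=
  τ.a0 =ᵐ[μ] ρ.a0 ∧ (∀ k, τ.ac k =ᵐ[μ] ρ.ac k) ∧ (∀ k, τ.as k =ᵐ[μ] ρ.as k)

end TPV

/-- The `L²(Q_T)` inner product `∫_{Q_T} u w dx dt`, expressed via Parseval's identity
(the identification of `u, w` with their Fourier series in time). -/
def ipQ {d : ℕ} (μ : Measure (Pt d)) (T : ℝ) (u w : TP d) : ℝ :=
  T * ipS μ u.a0 w.a0 +
    (T / 2) * ∑' k : ℕ, (ipS μ (u.ac k) (w.ac k) + ipS μ (u.as k) (w.as k))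

/-- Squared `L²(Q_T)` norm. -/
def nQ2 {d : ℕ} (μ : Measure (Pt d)) (T : ℝ) (u : TP d) : ℝ := ipQ μ T u u

/-- The `L²(Q_T)^d` inner product for vector-field-valued functions. -/
def ipQV {d : ℕ} (μ : Measure (Pt d)) (T : ℝ) (u w : TPV d) : ℝ :=
  T * ipV μ u.a0 w.a0 +
    (T / 2) * ∑' k : ℕ, (ipV μ (u.ac k) (w.ac k) + ipV μ (u.as k) (w.as k))

/-- Squared `L²(Q_T)^d` norm. -/
def nQ2V {d : ℕ} (μ : Measure (Pt d)) (T : ℝ) (u : TPV d) : ℝ := ipQV μ T u u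

/-- `⟨σ ∂_t^{1/2} u, ∂_t^{1/2} w⟩ := (T/2) ∑_{k≥1} kω ⟨σ u_k, w_k⟩_Ω`. -/
def ipHalf {d : ℕ} (μ : Measure (Pt d)) (T ω : ℝ) (σf : Pt d → ℝ) (u w : TP d) : ℝ :=
  (T / 2) * ∑' k : ℕ, (((k : ℝ) + 1) * ω) *
    (ipS μ (fun x => σf x * u.ac k x) (w.ac k) + ipS μ (fun x => σf x * u.as k x) (w.as k))

/-- The squared half time-derivative seminorm `‖∂_t^{1/2} u‖² = (T/2) ∑_{k≥1} kω ‖u_k‖²_Ω`. -/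
def halfSemi2 {d : ℕ} (μ : Measure (Pt d)) (T ω : ℝ) (u : TP d) : ℝ :=
  (T / 2) * ∑' k : ℕ, (((k : ℝ) + 1) * ω) * (nS2 μ (u.ac k) + nS2 μ (u.as k))

/-- Squared seminorm `|u|²_{1,1/2} = ‖∇u‖²_{L²(Q_T)} + ‖∂_t^{1/2}u‖²`. -/
def semi112 {d : ℕ} (μ : Measure (Pt d)) (T ω : ℝ) (u : TP d) : ℝ :=
  nQ2V μ T u.grad + halfSemi2 μ T ω u

/-- Squared norm `‖u‖²_{1,1/2} = ‖u‖²_{L²(Q_T)} + |u|²_{1,1/2}`. -/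
def norm112 {d : ℕ} (μ : Measure (Pt d)) (T ω : ℝ) (u : TP d) : ℝ :=
  nQ2 μ T u + semi112 μ T ω u

/-- Membership in `L²(Q_T)`. -/
def InL2Q {d : ℕ} (μ : Measure (Pt d)) (v : TP d) : Prop :=
  MemLp v.a0 2 μ ∧ (∀ k, MemLp (v.ac k) 2 μ) ∧ (∀ k, MemLp (v.as k) 2 μ) ∧
    Summable fun k : ℕ => nS2 μ (v.ac k) + nS2 μ (v.as k)

/-- Membership in `H^{0,1/2}_{per}(Q_T)`. -/
def InH0half {d : ℕ} (μ : Measure (Pt d)) (ω : ℝ) (v : TP d) : Prop :=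
  InL2Q μ v ∧ Summable fun k : ℕ => (((k : ℝ) + 1) * ω) * (nS2 μ (v.ac k) + nS2 μ (v.as k))

/-- Membership in `H^{0,1}_{per}(Q_T)` (the periodicity `v(·,0) = v(·,T)` is encoded in the
Fourier representation). -/
def InH01 {d : ℕ} (μ : Measure (Pt d)) (ω : ℝ) (v : TP d) : Prop :=
  InL2Q μ v ∧ InL2Q μ (v.dt ω)

/-- Membership in `H¹₀(Ω)` for a spatial function: square integrable, with square-integrable
gradient, vanishing outside `Ω`. -/
def InH10 {d : ℕ} (Ωs : Set (Pt d)) (μ : Measure (Pt d)) (f : Pt d → ℝ) : Prop :=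
  MemLp f 2 μ ∧ Differentiable ℝ f ∧ MemLp (gradient f) 2 μ ∧ ∀ x ∉ Ωs, f x = 0

/-- Membership in `H^{1,1/2}_{per}(Q_T)` (no boundary condition). -/
def InH1halfPer {d : ℕ} (μ : Measure (Pt d)) (ω : ℝ) (v : TP d) : Prop :=
  InL2Q μ v ∧ Differentiable ℝ v.a0 ∧ (∀ k, Differentiable ℝ (v.ac k)) ∧
    (∀ k, Differentiable ℝ (v.as k)) ∧ MemLp (gradient v.a0) 2 μ ∧
    (∀ k, MemLp (gradient (v.ac k)) 2 μ) ∧ (∀ k, MemLp (gradient (v.as k)) 2 μ) ∧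
    (Summable fun k : ℕ => nV2 μ (gradient (v.ac k)) + nV2 μ (gradient (v.as k))) ∧
    Summable fun k : ℕ => (((k : ℝ) + 1) * ω) * (nS2 μ (v.ac k) + nS2 μ (v.as k))

/-- Membership in `H^{1,1/2}_{0,per}(Q_T)`. -/
def InH1half {d : ℕ} (Ωs : Set (Pt d)) (μ : Measure (Pt d)) (ω : ℝ) (v : TP d) : Prop :=
  InL2Q μ v ∧ InH10 Ωs μ v.a0 ∧ (∀ k, InH10 Ωs μ (v.ac k)) ∧ (∀ k, InH10 Ωs μ (v.as k)) ∧
    (Summable fun k : ℕ => nV2 μ (gradient (v.ac k)) + nV2 μ (gradient (v.as k))) ∧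
    Summable fun k : ℕ => (((k : ℝ) + 1) * ω) * (nS2 μ (v.ac k) + nS2 μ (v.as k))

/-- Membership in `H^{1,1}_{0,per}(Q_T)`. -/
def InH11 {d : ℕ} (Ωs : Set (Pt d)) (μ : Measure (Pt d)) (ω : ℝ) (v : TP d) : Prop :=
  InH1half Ωs μ ω v ∧ InL2Q μ (v.dt ω)

/-- Membership in `H(div, Q_T)`. -/
def InHdiv {d : ℕ} (μ : Measure (Pt d)) (τ : TPV d) : Prop :=
  MemLp τ.a0 2 μ ∧ (∀ k, MemLp (τ.ac k) 2 μ) ∧ (∀ k, MemLp (τ.as k) 2 μ) ∧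
    (∀ i, Differentiable ℝ fun x => τ.a0 x i) ∧
    (∀ k i, Differentiable ℝ fun x => τ.ac k x i) ∧
    (∀ k i, Differentiable ℝ fun x => τ.as k x i) ∧
    MemLp (divg τ.a0) 2 μ ∧ (∀ k, MemLp (divg (τ.ac k)) 2 μ) ∧
    (∀ k, MemLp (divg (τ.as k)) 2 μ) ∧
    (Summable fun k : ℕ => nV2 μ (τ.ac k) + nV2 μ (τ.as k)) ∧
    Summable fun k : ℕ => nS2 μ (divg (τ.ac k)) + nS2 μ (divg (τ.as k))

/-- The bilinear form `B((y,p),(z,q))` of the reduced optimality system. -/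
def Bform {d : ℕ} (μ : Measure (Pt d)) (T ω : ℝ) (σf νf : Pt d → ℝ) (lam : ℝ)
    (y p z q : TP d) : ℝ :=
  ipQ μ T y z - ipQV μ T (TPV.wmul νf p.grad) z.grad + ipHalf μ T ω σf p z.perp +
    ipQV μ T (TPV.wmul νf y.grad) q.grad + ipHalf μ T ω σf y q.perp + lam⁻¹ * ipQ μ T p q

/-- `(y,p)` is the weak solution of the reduced optimality system with desired state `y_d`. -/
def SolvesOptSys {d : ℕ} (Ωs : Set (Pt d)) (μ : Measure (Pt d)) (T ω : ℝ)
    (σf νf : Pt d → ℝ) (lam : ℝ) (yd y p : TP d) : Prop :=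
  InH1half Ωs μ ω y ∧ InH1half Ωs μ ω p ∧
    ∀ z q : TP d, InH1half Ωs μ ω z → InH1half Ωs μ ω q →
      Bform μ T ω σf νf lam y p z q = ipQ μ T yd z

/-- `y` is the weak solution of the time-periodic state equation
`σ ∂_t y − div(ν ∇y) = v`, `y = 0` on `Σ_T`, `y(·,0) = y(·,T)`. -/
def SolvesState {d : ℕ} (Ωs : Set (Pt d)) (μ : Measure (Pt d)) (T ω : ℝ)
    (σf νf : Pt d → ℝ) (v y : TP d) : Prop :=
  InH1half Ωs μ ω y ∧
    ∀ z : TP d, InH1half Ωs μ ω z →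
      ipQV μ T (TPV.wmul νf y.grad) z.grad + ipHalf μ T ω σf y z.perp = ipQ μ T v z

/-- Residual `R₁(η,ζ,τ) = σ ∂_t η + λ⁻¹ ζ − div τ`. -/
def R1 {d : ℕ} (ω : ℝ) (σf : Pt d → ℝ) (lam : ℝ) (η ζ : TP d) (τ : TPV d) : TP d :=
  (((η.dt ω).wmul σf).add (ζ.smul lam⁻¹)).sub τ.div

/-- Residual `R₂(η,τ) = τ − ν ∇η`. -/
def R2 {d : ℕ} (νf : Pt d → ℝ) (η : TP d) (τ : TPV d) : TPV d :=
  τ.sub (TPV.wmul νf η.grad)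

/-- Residual `R₃(η,ζ,ρ) = σ ∂_t ζ + η − div ρ − y_d`. -/
def R3 {d : ℕ} (ω : ℝ) (σf : Pt d → ℝ) (η ζ : TP d) (ρ : TPV d) (yd : TP d) : TP d :=
  ((((ζ.dt ω).wmul σf).add η).sub ρ.div).sub yd

/-- Residual `R₄(ζ,ρ) = ρ + ν ∇ζ`. -/
def R4 {d : ℕ} (νf : Pt d → ℝ) (ζ : TP d) (ρ : TPV d) : TPV d :=
  ρ.add (TPV.wmul νf ζ.grad)

/-- The cost functional `J(y,v) = ½‖y − y_d‖² + (λ/2)‖v‖²`. -/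
def costJ {d : ℕ} (μ : Measure (Pt d)) (T lam : ℝ) (yd y v : TP d) : ℝ :=
  (1 / 2) * nQ2 μ T (y.sub yd) + (lam / 2) * nQ2 μ T v

/-- The majorant `J⊕(α,β;η,τ,v)` of the cost functional. -/
def Jmaj {d : ℕ} (μ : Measure (Pt d)) (T ω : ℝ) (σf νf : Pt d → ℝ) (lam CF mu1 : ℝ)
    (yd : TP d) (α β : ℝ) (η : TP d) (τ : TPV d) (v : TP d) : ℝ :=
  ((1 + α) / 2) * nQ2 μ T (η.sub yd) +
    ((1 + α) * (1 + β) * CF ^ 2 / (2 * α * mu1 ^ 2)) * nQ2V μ T (τ.sub (TPV.wmul νf η.grad)) +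
    ((1 + α) * (1 + β) * CF ^ 4 / (2 * α * β * mu1 ^ 2)) *
      nQ2 μ T ((((η.dt ω).wmul σf).sub τ.div).sub v) +
    (lam / 2) * nQ2 μ T v

/-!
All three identities come from bilinearity of `B` together with two symmetry facts of the
pairings, mode by mode: the `L²` and `ν`-weighted gradient pairings are symmetric, while pairing
against `·^⊥` (a quarter-period rotation of every Fourier mode) is antisymmetric, so
`⟨u, u^⊥⟩ = 0`. The remaining cross terms cancel because `λ⁻¹ √λ = (√λ)⁻¹`.
-/

section Gradient

variable {E : Type*} [NormedAddCommGroup E] [InnerProductSpace ℝ E] [CompleteSpace E]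

lemma gradient_const_mul (c : ℝ) (f : E → ℝ) : gradient (fun x => c * f x) = c • gradient f := by
  ext1 x
  simp only [gradient, Pi.smul_apply]
  rw [show (fun x => c * f x) = c • f from rfl, fderiv_const_smul_field, Pi.smul_apply,
    LinearIsometryEquiv.map_smul]

lemma gradient_neg (f : E → ℝ) : gradient (-f) = -gradient f := by
  ext1 x
  simp only [gradient, Pi.neg_apply, fderiv_neg, map_neg]

end Gradient

def TPV.perp {d : ℕ} (τ : TPV d) : TPV d :=
  ⟨0, τ.as, fun k => -τ.ac k⟩

namespace TP

variable {d : ℕ}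

lemma grad_smul (c : ℝ) (v : TP d) : (v.smul c).grad = v.grad.smul c := by
  simp only [grad, smul, TPV.smul, gradient_const_mul]
  rfl

lemma grad_perp (v : TP d) : v.perp.grad = v.grad.perp := by
  simp only [grad, perp, TPV.perp, gradient_neg]
  congr 1
  exact gradient_fun_const' (0 : ℝ)

lemma perp_smul (c : ℝ) (v : TP d) : (v.smul c).perp = v.perp.smul c := by
  simp only [perp, smul, mk.injEq, true_and]
  constructor
  · funext x; simp
  · funext k x; simp

end TP

section Pairings

variable {d : ℕ} (μ : Measure (Pt d)) (T ω : ℝ)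

lemma ipS_comm (f g : Pt d → ℝ) : ipS μ f g = ipS μ g f := by
  simp only [ipS, mul_comm]

lemma ipS_mul_left_comm (σf f g : Pt d → ℝ) :
    ipS μ (fun x => σf x * f x) g = ipS μ (fun x => σf x * g x) f := by
  simp only [ipS, mul_right_comm]

lemma ipS_const_mul_right (f g : Pt d → ℝ) (c : ℝ) :
    ipS μ f (fun x => c * g x) = c * ipS μ f g := by
  simp only [ipS, mul_left_comm _ c, integral_const_mul]

lemma ipS_neg_right (f g : Pt d → ℝ) : ipS μ f (-g) = -ipS μ f g := by
  simp only [ipS, Pi.neg_apply, mul_neg, integral_neg]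

lemma ipS_zero_right (f : Pt d → ℝ) : ipS μ f 0 = 0 := by
  simp only [ipS, Pi.zero_apply, mul_zero, integral_zero]

lemma ipV_smul_right (f g : Pt d → Pt d) (c : ℝ) :
    ipV μ f (fun x => c • g x) = c * ipV μ f g := by
  simp only [ipV, real_inner_smul_right, integral_const_mul]

lemma ipV_neg_right (f g : Pt d → Pt d) : ipV μ f (-g) = -ipV μ f g := by
  simp only [ipV, Pi.neg_apply, inner_neg_right, integral_neg]

lemma ipV_zero_right (f : Pt d → Pt d) : ipV μ f 0 = 0 := by
  simp only [ipV, Pi.zero_apply, inner_zero_right, integral_zero]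

lemma ipV_smul_left_comm (νf : Pt d → ℝ) (f g : Pt d → Pt d) :
    ipV μ (fun x => νf x • f x) g = ipV μ (fun x => νf x • g x) f := by
  unfold ipV
  congr 1 with x
  rw [real_inner_smul_left, real_inner_smul_left, real_inner_comm]

lemma ipQ_comm (u w : TP d) : ipQ μ T u w = ipQ μ T w u := by
  simp only [ipQ, ipS_comm μ u.a0, ipS_comm μ (u.ac _), ipS_comm μ (u.as _)]

lemma ipQ_smul_right (c : ℝ) (u w : TP d) : ipQ μ T u (w.smul c) = c * ipQ μ T u w := by
  simp only [ipQ, TP.smul, ipS_const_mul_right, ← mul_add, tsum_mul_left]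
  ring

lemma ipQ_perp_anti (u w : TP d) : ipQ μ T u w.perp = -ipQ μ T w u.perp := by
  have hk : ∀ k, ipS μ (u.ac k) (w.as k) + ipS μ (u.as k) (-w.ac k) =
      -(ipS μ (w.ac k) (u.as k) + ipS μ (w.as k) (-u.ac k)) := fun k => by
    rw [ipS_neg_right, ipS_neg_right, ipS_comm μ (u.ac k), ipS_comm μ (u.as k)]
    ring
  simp only [ipQ, TP.perp, ipS_zero_right, tsum_congr hk, tsum_neg]
  ring

lemma ipQV_smul_right (c : ℝ) (τ ρ : TPV d) : ipQV μ T τ (ρ.smul c) = c * ipQV μ T τ ρ := by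
  simp only [ipQV, TPV.smul, ipV_smul_right, ← mul_add, tsum_mul_left]
  ring

lemma ipQV_wmul_comm (νf : Pt d → ℝ) (τ ρ : TPV d) :
    ipQV μ T (τ.wmul νf) ρ = ipQV μ T (ρ.wmul νf) τ := by
  simp only [ipQV, TPV.wmul, ipV_smul_left_comm μ νf τ.a0, ipV_smul_left_comm μ νf (τ.ac _),
    ipV_smul_left_comm μ νf (τ.as _)]

lemma ipQV_wmul_perp_anti (νf : Pt d → ℝ) (τ ρ : TPV d) :
    ipQV μ T (τ.wmul νf) ρ.perp = -ipQV μ T (ρ.wmul νf) τ.perp := by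
  have hk : ∀ k, ipV μ (fun x => νf x • τ.ac k x) (ρ.as k) +
        ipV μ (fun x => νf x • τ.as k x) (-ρ.ac k) =
      -(ipV μ (fun x => νf x • ρ.ac k x) (τ.as k) +
        ipV μ (fun x => νf x • ρ.as k x) (-τ.ac k)) := fun k => by
    rw [ipV_neg_right, ipV_neg_right, ipV_smul_left_comm μ νf (τ.ac k),
      ipV_smul_left_comm μ νf (τ.as k)]
    ring
  simp only [ipQV, TPV.wmul, TPV.perp, ipV_zero_right, tsum_congr hk, tsum_neg]
  ring

lemma ipQV_wmul_perp_self (νf : Pt d → ℝ) (τ : TPV d) : ipQV μ T (τ.wmul νf) τ.perp = 0 := by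
  linarith [ipQV_wmul_perp_anti μ T νf τ τ]

lemma ipHalf_smul_right (σf : Pt d → ℝ) (c : ℝ) (u w : TP d) :
    ipHalf μ T ω σf u (w.smul c) = c * ipHalf μ T ω σf u w := by
  simp only [ipHalf, TP.smul, ipS_const_mul_right, ← mul_add, mul_left_comm _ c, tsum_mul_left]

lemma ipHalf_perp_anti (σf : Pt d → ℝ) (u w : TP d) :
    ipHalf μ T ω σf u w.perp = -ipHalf μ T ω σf w u.perp := by
  have hk : ∀ k : ℕ, ((k : ℝ) + 1) * ω *
        (ipS μ (fun x => σf x * u.ac k x) (w.as k) + ipS μ (fun x => σf x * u.as k x) (-w.ac k)) =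
      -(((k : ℝ) + 1) * ω *
        (ipS μ (fun x => σf x * w.ac k x) (u.as k) +
          ipS μ (fun x => σf x * w.as k x) (-u.ac k))) := fun k => by
    rw [ipS_neg_right, ipS_neg_right, ipS_mul_left_comm μ σf (u.ac k),
      ipS_mul_left_comm μ σf (u.as k)]
    ring
  simp only [ipHalf, TP.perp, tsum_congr hk, tsum_neg]
  ring

lemma ipHalf_perp_self (σf : Pt d → ℝ) (u : TP d) : ipHalf μ T ω σf u u.perp = 0 := by
  linarith [ipHalf_perp_anti μ T ω σf u u]

lemma ipHalf_perp_perp (σf : Pt d → ℝ) (u w : TP d) :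
    ipHalf μ T ω σf u w.perp.perp = -ipHalf μ T ω σf u w := by
  simp only [ipHalf, TP.perp, ipS_neg_right, ← neg_add, mul_neg, tsum_neg]

end Pairings

theorem statement5_general
    {d : ℕ}
    (μ : Measure (Pt d))
    (T ω : ℝ)
    (σf : Pt d → ℝ)
    (νf : Pt d → ℝ)
    (lam : ℝ)
    (y p : TP d) :
    Bform μ T ω σf νf lam y p y p = nQ2 μ T y + lam⁻¹ * nQ2 μ T p ∧
    Bform μ T ω σf νf lam y p (p.smul (-(Real.sqrt lam)⁻¹)) (y.smul (Real.sqrt lam)) =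
        (Real.sqrt lam)⁻¹ * ipQV μ T (TPV.wmul νf p.grad) p.grad +
          Real.sqrt lam * ipQV μ T (TPV.wmul νf y.grad) y.grad ∧
    Bform μ T ω σf νf lam y p (p.perp.smul (-(Real.sqrt lam)⁻¹))
        (y.perp.smul (-(Real.sqrt lam))) =
      (Real.sqrt lam)⁻¹ * ipHalf μ T ω σf p p + Real.sqrt lam * ipHalf μ T ω σf y y := by
  have hsqrt : lam⁻¹ * √lam = (√lam)⁻¹ := by rw [← div_eq_inv_mul, sqrt_div_self', one_div]
  refine ⟨?_, ?_, ?_⟩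
  · rw [Bform, nQ2, nQ2, ipQV_wmul_comm μ T νf p.grad, ipHalf_perp_anti μ T ω σf p y]
    ring
  · rw [Bform, TP.grad_smul, TP.grad_smul, TP.perp_smul, TP.perp_smul, ipQ_smul_right,
      ipQ_smul_right, ipQV_smul_right, ipQV_smul_right, ipHalf_smul_right, ipHalf_smul_right,
      ipHalf_perp_self, ipHalf_perp_self, ipQ_comm μ T p y]
    linear_combination ipQ μ T y p * hsqrt
  · rw [Bform, TP.grad_smul, TP.grad_smul, TP.perp_smul, TP.perp_smul, TP.grad_perp,
      TP.grad_perp, ipQ_smul_right, ipQ_smul_right, ipQV_smul_right, ipQV_smul_right,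
      ipQV_wmul_perp_self, ipQV_wmul_perp_self, ipHalf_smul_right, ipHalf_smul_right,
      ipHalf_perp_perp, ipHalf_perp_perp, ipQ_perp_anti μ T p y]
    linear_combination ipQ μ T y p.perp * hsqrt

/-- the three identities for `B` obtained from the orthogonality relations. -/
theorem statement5
    {d : ℕ} (hd : 1 ≤ d ∧ d ≤ 3)
    (Ωs : Set (Pt d)) (hΩo : IsOpen Ωs) (hΩb : Bornology.IsBounded Ωs)
    (μ : Measure (Pt d)) (hμ : μ = MeasureTheory.volume.restrict Ωs)
    (T ω : ℝ) (hT : 0 < T) (hω : ω = 2 * Real.pi / T)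
    (σf : Pt d → ℝ) (sigl sigu : ℝ) (hσm : Measurable σf) (hsigl : 0 < sigl)
    (hσb : ∀ᵐ x ∂μ, sigl ≤ σf x ∧ σf x ≤ sigu)
    (νf : Pt d → ℝ) (nul nuu : ℝ) (hνm : Measurable νf) (hnul : 0 < nul)
    (hνb : ∀ᵐ x ∂μ, nul ≤ νf x ∧ νf x ≤ nuu)
    (lam : ℝ) (hlam : 0 < lam)
    (y p : TP d) (hy : InH1half Ωs μ ω y) (hp : InH1half Ωs μ ω p) :
    Bform μ T ω σf νf lam y p y p = nQ2 μ T y + lam⁻¹ * nQ2 μ T p ∧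
    Bform μ T ω σf νf lam y p (p.smul (-(Real.sqrt lam)⁻¹)) (y.smul (Real.sqrt lam)) =
        (Real.sqrt lam)⁻¹ * ipQV μ T (TPV.wmul νf p.grad) p.grad +
          Real.sqrt lam * ipQV μ T (TPV.wmul νf y.grad) y.grad ∧
    Bform μ T ω σf νf lam y p (p.perp.smul (-(Real.sqrt lam)⁻¹))
        (y.perp.smul (-(Real.sqrt lam))) =
      (Real.sqrt lam)⁻¹ * ipHalf μ T ω σf p p + Real.sqrt lam * ipHalf μ T ω σf y y :=
  statement5_general μ T ω σf νf lam y p
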